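/- Let n be a positive integer and let σ_1, …, σ_n ≥ 0 and σ'_1, …, σ'_n ≥ 0 satisfy σ_i ≤ σ'_i ≤ 2·σ_i for every i. Let X_1, …, X_n be independent random variables with X_i Gaussian with mean 0 and variance σ_i², and let X'_1, …, X'_n be independent random variables with X'_i Gaussian with mean 0 and variance σ'_i². Then E[max_{i∈[n]} X_i] ≤ E[max_{i∈[n]} X'_i] ≤ 2·E[max_{i∈[n]} X_i]. -/

import Mathlib

/-!
Write `X_i = σ_i Z_i` with `Z` a standard Gaussian vector, so that `E[max_i X_i] = Φ(σ)` where
`Φ(σ) = E[max_i σ_i Z_i]`. As an expectation of a maximum of linear functions of `σ`, `Φ` is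
convex; since flipping the sign of `Z_j` does not change the law of `Z`, `Φ` is even in each
`σ_j`. A convex function that is even in `σ_j` is nondecreasing in `σ_j` on `[0, ∞)`, so `Φ` is
monotone on the nonnegative orthant, and `Φ(2σ) = 2 Φ(σ)` gives the factor `2`.
-/

open MeasureTheory ProbabilityTheory Function Set

section Monotone

variable {ι α β : Type*} [Fintype ι] [DecidableEq ι] [Preorder α] [Preorder β]

theorem le_of_monotoneOn_update {f : (ι → α) → β} {S : Set α}
    (hf : ∀ c j, MonotoneOn (fun t ↦ f (update c j t)) S)
    {a b : ι → α} (ha : ∀ i, a i ∈ S) (hb : ∀ i, b i ∈ S) (hab : a ≤ b) : f a ≤ f b := by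
  suffices ∀ s : Finset ι, f a ≤ f (s.piecewise b a) by
    simpa using this Finset.univ
  intro s
  induction s using Finset.induction with
  | empty => simp
  | insert j s hj ih =>
    calc f a ≤ f (s.piecewise b a) := ih
      _ = f (update (s.piecewise b a) j (a j)) := by
        rw [update_eq_self_iff.2 (s.piecewise_eq_of_notMem _ _ hj).symm]
      _ ≤ f (update (s.piecewise b a) j (b j)) := hf _ j (ha j) (hb j) (hab j)
      _ = f ((insert j s).piecewise b a) := by rw [Finset.piecewise_insert]

end Monotone

theorem update_mem_segment {ι 𝕜 E : Type*} [DecidableEq ι] [Semiring 𝕜] [PartialOrder 𝕜]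
    [AddCommMonoid E] [Module 𝕜 E] (σ : ι → E) (j : ι) {x y t : E}
    (ht : t ∈ segment 𝕜 x y) : update σ j t ∈ segment 𝕜 (update σ j x) (update σ j y) := by
  obtain ⟨a, b, ha, hb, hab, rfl⟩ := ht
  refine ⟨a, b, ha, hb, hab, ?_⟩
  rw [← update_smul, ← update_smul, ← update_add, Convex.combo_self hab]

theorem abs_iSup_le_sum_abs {ι : Type*} [Fintype ι] [Nonempty ι] (f : ι → ℝ) :
    |⨆ i, f i| ≤ ∑ i, |f i| := by
  have hle : ∀ i, |f i| ≤ ∑ i, |f i| := fun i ↦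
    Finset.single_le_sum (fun i _ ↦ abs_nonneg (f i)) (Finset.mem_univ i)
  obtain ⟨i₀⟩ := ‹Nonempty ι›
  refine abs_le.2 ⟨?_, ciSup_le fun i ↦ (le_abs_self _).trans (hle i)⟩
  exact (neg_le.1 ((neg_le_abs _).trans (hle i₀))).trans (le_ciSup (Finite.bddAbove_range f) i₀)

def reflectCoord {ι : Type*} [DecidableEq ι] (j : ι) (z : ι → ℝ) : ι → ℝ := update z j (-z j)

noncomputable def expectedSup {ι : Type*} (μ : Measure (ι → ℝ)) (σ : ι → ℝ) : ℝ :=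
  ∫ z, ⨆ i, σ i * z i ∂μ

namespace expectedSup

variable {ι : Type*} {μ : Measure (ι → ℝ)}

theorem smul (σ : ι → ℝ) {c : ℝ} (hc : 0 ≤ c) : expectedSup μ (c • σ) = c * expectedSup μ σ := by
  simp only [expectedSup, ← integral_const_mul, Real.mul_iSup_of_nonneg hc, Pi.smul_apply,
    smul_eq_mul, mul_assoc]

variable [Fintype ι]

theorem measurable_iSup_mul (σ : ι → ℝ) : Measurable fun z : ι → ℝ ↦ ⨆ i, σ i * z i :=
  Measurable.iSup fun _ ↦ by fun_prop

theorem update_neg [DecidableEq ι] (hrefl : ∀ j, MeasurePreserving (reflectCoord j) μ μ)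
    (σ : ι → ℝ) (j : ι) (t : ℝ) :
    expectedSup μ (update σ j (-t)) = expectedSup μ (update σ j t) := by
  have hreflect : ∀ z : ι → ℝ, ⨆ i, update σ j (-t) i * z i
      = ⨆ i, update σ j t i * reflectCoord j z i := fun z ↦ by
    congr 1 with i
    rcases eq_or_ne i j with rfl | hij
    · simp [reflectCoord]
    · simp [reflectCoord, hij]
  have hmap := integral_map (hrefl j).aemeasurable
    (measurable_iSup_mul (update σ j t)).aestronglyMeasurable
  rw [(hrefl j).map_eq] at hmap
  simp only [expectedSup, hreflect, hmap]

variable [Nonempty ι]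

theorem integrable (hμ : ∀ i, Integrable (fun z ↦ z i) μ) (σ : ι → ℝ) :
    Integrable (fun z ↦ ⨆ i, σ i * z i) μ := by
  refine Integrable.mono' (g := fun z ↦ ∑ i, |σ i * z i|)
    (integrable_finsetSum _ fun i _ ↦ ((hμ i).const_mul (σ i)).abs) ?_ (ae_of_all _ fun z ↦ ?_)
  · exact (measurable_iSup_mul σ).aestronglyMeasurable
  · simpa only [Real.norm_eq_abs] using abs_iSup_le_sum_abs fun i ↦ σ i * z i

theorem convexOn (hμ : ∀ i, Integrable (fun z ↦ z i) μ) : ConvexOn ℝ univ (expectedSup μ) := by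
  refine ⟨convex_univ, fun σ _ τ _ a b ha hb hab ↦ ?_⟩
  have hsup : ∀ (ρ z : ι → ℝ) i, ρ i * z i ≤ ⨆ i, ρ i * z i := fun ρ z ↦
    le_ciSup (Finite.bddAbove_range _)
  have hpointwise : ∀ z : ι → ℝ, ⨆ i, (a • σ + b • τ) i * z i
      ≤ a * (⨆ i, σ i * z i) + b * ⨆ i, τ i * z i := fun z ↦ ciSup_le fun i ↦ by
    simp only [Pi.add_apply, Pi.smul_apply, smul_eq_mul, add_mul, mul_assoc]
    exact add_le_add (mul_le_mul_of_nonneg_left (hsup σ z i) ha)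
      (mul_le_mul_of_nonneg_left (hsup τ z i) hb)
  simp only [expectedSup, smul_eq_mul, ← integral_const_mul]
  rw [← integral_add ((integrable hμ σ).const_mul a) ((integrable hμ τ).const_mul b)]
  exact integral_mono (integrable hμ _)
    (((integrable hμ σ).const_mul a).add ((integrable hμ τ).const_mul b)) fun z ↦ hpointwise z

variable [DecidableEq ι]

theorem monotoneOn_update (hμ : ∀ i, Integrable (fun z ↦ z i) μ)
    (hrefl : ∀ j, MeasurePreserving (reflectCoord j) μ μ) (σ : ι → ℝ) (j : ι) :
    MonotoneOn (fun t ↦ expectedSup μ (update σ j t)) (Ici 0) := by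
  intro u hu v _ huv
  have hseg : u ∈ segment ℝ (-v) v := by
    rw [segment_eq_Icc (by linarith [hu.out])]
    exact ⟨by linarith [hu.out], huv⟩
  simpa [update_neg hrefl] using
    (convexOn hμ).le_on_segment (mem_univ _) (mem_univ _) (update_mem_segment σ j hseg)

theorem mono (hμ : ∀ i, Integrable (fun z ↦ z i) μ)
    (hrefl : ∀ j, MeasurePreserving (reflectCoord j) μ μ) {σ τ : ι → ℝ} (hσ : 0 ≤ σ) (hστ : σ ≤ τ) :
    expectedSup μ σ ≤ expectedSup μ τ :=
  le_of_monotoneOn_update (monotoneOn_update hμ hrefl) hσ (fun i ↦ (hσ i).trans (hστ i)) hστ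

end expectedSup

theorem measurePreserving_reflectCoord_pi {ι : Type*} [Fintype ι] [DecidableEq ι]
    (ν : ι → Measure ℝ) [∀ i, SigmaFinite (ν i)] (hν : ∀ i, MeasurePreserving Neg.neg (ν i) (ν i))
    (j : ι) : MeasurePreserving (reflectCoord j) (Measure.pi ν) (Measure.pi ν) := by
  convert measurePreserving_pi ν ν (f := update (fun _ ↦ id) j Neg.neg) fun i ↦ ?_ using 1
  · ext z i
    rcases eq_or_ne i j with rfl | hij
    · simp [reflectCoord]
    · simp [reflectCoord, hij]
  · rcases eq_or_ne i j with rfl | hij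
    · simpa using hν i
    · simpa [hij] using MeasurePreserving.id (ν i)

theorem integral_iSup_eq_expectedSup {ι Ω : Type*} [Fintype ι] [MeasurableSpace Ω]
    {P : Measure Ω} {X : ι → Ω → ℝ} (hmX : ∀ i, Measurable (X i)) (hind : iIndepFun X P)
    (ν : ι → Measure ℝ) [∀ i, IsProbabilityMeasure (ν i)] {σ : ι → ℝ}
    (hX : ∀ i, P.map (X i) = (ν i).map (σ i * ·)) :
    ∫ ω, ⨆ i, X i ω ∂P = expectedSup (Measure.pi ν) σ := by
  have hlaw : P.map (fun ω i ↦ X i ω) = (Measure.pi ν).map (fun z i ↦ σ i * z i) := by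
    have (i : ι) : IsProbabilityMeasure ((ν i).map (σ i * ·)) :=
      Measure.isProbabilityMeasure_map (by fun_prop)
    rw [hind.map_fun_eq_pi_map fun i ↦ (hmX i).aemeasurable, funext hX,
      Measure.pi_map_pi fun i ↦ by fun_prop]
  have hsup : Measurable fun y : ι → ℝ ↦ ⨆ i, y i := Measurable.iSup measurable_pi_apply
  have hscale : Measurable fun (z : ι → ℝ) i ↦ σ i * z i := by fun_prop
  rw [← integral_map (measurable_pi_lambda _ hmX).aemeasurable hsup.aestronglyMeasurable, hlaw,
    integral_map hscale.aemeasurable hsup.aestronglyMeasurable]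
  rfl

theorem gaussianReal_zero_eq_map_const_mul (c : ℝ) :
    gaussianReal 0 (c ^ 2).toNNReal = (gaussianReal 0 1).map (c * ·) := by
  rw [gaussianReal_map_const_mul, mul_zero, mul_one]
  congr
  ext
  simp [Real.coe_toNNReal _ (sq_nonneg c)]

theorem measurePreserving_neg_gaussianReal_zero (v : NNReal) :
    MeasurePreserving Neg.neg (gaussianReal 0 v) (gaussianReal 0 v) :=
  ⟨measurable_neg, by simpa using gaussianReal_map_neg (μ := 0) (v := v)⟩

theorem expected_max_two_approx
    (n : ℕ) (hn : 0 < n)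
    (Ω : Type) [MeasurableSpace Ω] (P : Measure Ω)
    (Ω' : Type) [MeasurableSpace Ω'] (P' : Measure Ω')
    (σ σ' : Fin n → ℝ) (hσ : ∀ i, 0 ≤ σ i)
    (hle : ∀ i, σ i ≤ σ' i) (hle2 : ∀ i, σ' i ≤ 2 * σ i)
    (X : Fin n → Ω → ℝ) (hmX : ∀ i, Measurable (X i))
    (hindX : iIndepFun X P)
    (hX : ∀ i, Measure.map (X i) P = gaussianReal 0 (Real.toNNReal (σ i ^ 2)))
    (X' : Fin n → Ω' → ℝ) (hmX' : ∀ i, Measurable (X' i))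
    (hindX' : iIndepFun X' P')
    (hX' : ∀ i, Measure.map (X' i) P' = gaussianReal 0 (Real.toNNReal (σ' i ^ 2))) :
    (∫ ω, ⨆ i, X i ω ∂P) ≤ (∫ ω, ⨆ i, X' i ω ∂P') ∧
      (∫ ω, ⨆ i, X' i ω ∂P') ≤ 2 * ∫ ω, ⨆ i, X i ω ∂P := by
  have : Nonempty (Fin n) := ⟨⟨0, hn⟩⟩
  set γ := Measure.pi fun _ : Fin n ↦ gaussianReal 0 1
  have hγ : ∀ i, Integrable (fun z ↦ z i) γ := fun i ↦ integrable_eval IsGaussian.integrable_id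
  have hrefl : ∀ j, MeasurePreserving (reflectCoord j) γ γ :=
    measurePreserving_reflectCoord_pi _ fun _ ↦ measurePreserving_neg_gaussianReal_zero 1
  rw [integral_iSup_eq_expectedSup hmX hindX _
      fun i ↦ (hX i).trans (gaussianReal_zero_eq_map_const_mul _),
    integral_iSup_eq_expectedSup hmX' hindX' _
      fun i ↦ (hX' i).trans (gaussianReal_zero_eq_map_const_mul _)]
  have hσ' : 0 ≤ σ' := fun i ↦ (hσ i).trans (hle i)
  refine ⟨expectedSup.mono hγ hrefl hσ hle, ?_⟩
  calc expectedSup γ σ' ≤ expectedSup γ (2 • σ) := expectedSup.mono hγ hrefl hσ' hle2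
    _ = 2 * expectedSup γ σ := expectedSup.smul σ zero_le_two
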